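/- Let D be a triangulated category, E ⊆ D admissible, and (G, F) an adjoint pair of exact endofunctors of D. If F restricts to an autoequivalence of E and acts nilpotently on E^⊥, then G maps the left orthogonal ^⊥E into itself and acts nilpotently on ^⊥E, i.e. G(^⊥E) ⊆ ^⊥E and G^b(^⊥E) = 0 for some natural number b. -/

import Mathlib

/-!
Let `D` be a triangulated category, `E ⊆ D` admissible, and `(G, F)` an adjoint pair of
exact endofunctors of `D`.  If `F` restricts to an autoequivalence of `E` and acts
nilpotently on `E^⊥`, then `G` maps the left orthogonal `^⊥E` into itself and acts
nilpotently on `^⊥E`: `G(^⊥E) ⊆ ^⊥E` and `G^b(^⊥E) = 0` for some natural number `b`.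
-/

open CategoryTheory Limits CategoryTheory.Pretriangulated

namespace Stmt5

universe v u

variable {D : Type u} [Category.{v} D] [Preadditive D] [HasZeroObject D]
  [HasShift D ℤ] [∀ n : ℤ, (CategoryTheory.shiftFunctor D n).Additive] [Pretriangulated D]

/-- Iterated composition of an endofunctor. -/
def iter (F : D ⥤ D) : ℕ → D ⥤ D
  | 0 => 𝟭 D
  | n + 1 => iter F n ⋙ F

/-- The right orthogonal of a class of objects. -/
def rOrth (P : D → Prop) : D → Prop := fun d => ∀ e : D, P e → ∀ f : e ⟶ d, f = 0

/-- The left orthogonal of a class of objects. -/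
def lOrth (P : D → Prop) : D → Prop := fun d => ∀ e : D, P e → ∀ f : d ⟶ e, f = 0

/-
Since `E` is right admissible, every `x` sits in a triangle `e → x → c → e[1]` with
`e ∈ E` and `c ∈ E^⊥`. Applying `F^b` kills `c` and keeps `F^b e` in `E`, so every map from an
object of `^⊥E` to `F^b x` factors through `F^b e` and vanishes. By adjunction
`Hom(G^b d, x) = Hom(d, F^b x) = 0` for `d ∈ ^⊥E`, so `G^b d = 0`; the same argument with one
`F` shows `G(^⊥E) ⊆ ^⊥E`.
-/

lemma _root_.CategoryTheory.Adjunction.hom_eq_zero_of_forall_hom_eq_zero {C C' : Type*}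
    [Category C] [Category C'] [HasZeroMorphisms C] [HasZeroMorphisms C']
    {L : C ⥤ C'} {R : C' ⥤ C} (adj : L ⊣ R)
    {X : C} {Y : C'} (h : ∀ f : X ⟶ R.obj Y, f = 0) (g : L.obj X ⟶ Y) : g = 0 :=
  (adj.homEquiv X Y).injective ((h _).trans (h _).symm)

lemma _root_.CategoryTheory.Adjunction.bijective_comp_counit {C C' : Type*}
    [Category C] [Category C'] {L : C ⥤ C'} {R : C' ⥤ C} (adj : L ⊣ R) (hL : L.FullyFaithful)
    (c : C) (x : C') :
    Function.Bijective fun u : L.obj c ⟶ L.obj (R.obj x) => u ≫ adj.counit.app x := by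
  have h : (fun u : L.obj c ⟶ L.obj (R.obj x) => u ≫ adj.counit.app x) =
      hL.homEquiv.symm.trans (adj.homEquiv c x).symm := by
    funext u
    simp [Adjunction.homEquiv_counit]
  exact h ▸ Equiv.bijective _

lemma prop_iter_obj {C : Type*} [Category C] {P : C → Prop} {F : C ⥤ C}
    (hFP : ∀ c : C, P c → P (F.obj c)) : ∀ (n : ℕ) {c : C}, P c → P ((iter F n).obj c)
  | 0, _, hd => hd
  | n + 1, _, hd => hFP _ (prop_iter_obj hFP n hd)

instance iterCommShift (F : D ⥤ D) [F.CommShift ℤ] : ∀ n : ℕ, (iter F n).CommShift ℤ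
  | 0 => inferInstanceAs ((𝟭 D).CommShift ℤ)
  | n + 1 => letI := iterCommShift F n; inferInstanceAs ((iter F n ⋙ F).CommShift ℤ)

instance iter_isTriangulated (F : D ⥤ D) [F.CommShift ℤ] [F.IsTriangulated] :
    ∀ n : ℕ, (iter F n).IsTriangulated
  | 0 => inferInstanceAs ((𝟭 D).IsTriangulated)
  | n + 1 =>
      letI := iter_isTriangulated F n
      inferInstanceAs ((iter F n ⋙ F).IsTriangulated)

def iterCompIso {C : Type*} [Category C] (F : C ⥤ C) :
    ∀ n : ℕ, F ⋙ iter F n ≅ iter F n ⋙ F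
  | 0 => F.rightUnitor ≪≫ F.leftUnitor.symm
  | n + 1 => (Functor.associator F (iter F n) F).symm ≪≫
      Functor.isoWhiskerRight (iterCompIso F n) F

noncomputable def iterAdjunction {C : Type*} [Category C] {F G : C ⥤ C} (adj : G ⊣ F) :
    ∀ n : ℕ, iter G n ⊣ iter F n
  | 0 => Adjunction.id
  | n + 1 => ((iterAdjunction adj n).comp adj).ofNatIsoRight (iterCompIso F n)

lemma rOrth_obj₃_of_bijective {P : D → Prop} (hP_shift : ∀ (X : D) (n : ℤ), P X → P (X⟦n⟧))
    {T : Triangle D} (hT : T ∈ distTriang D)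
    (hbij : ∀ e : D, P e → Function.Bijective fun u : e ⟶ T.obj₁ => u ≫ T.mor₁) :
    rOrth P T.obj₃ := by
  intro e he f
  -- `(f ≫ T.mor₃)⟦-1⟧` lands in `T.obj₁` and is killed by `T.mor₁`: injectivity at `e⟦-1⟧`.
  have hf₃ : f ≫ T.mor₃ = 0 := by
    let ε := shiftFunctorCompIsoId D (1 : ℤ) (-1) (by omega)
    have hu : (f ≫ T.mor₃)⟦(-1 : ℤ)⟧' ≫ ε.hom.app T.obj₁ = 0 := by
      apply (hbij _ (hP_shift e (-1) he)).1
      have hε := ε.hom.naturality T.mor₁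
      dsimp only [Functor.comp_map, Functor.id_map] at hε ⊢
      rw [Category.assoc, ← hε, ← Category.assoc, ← Functor.map_comp, Category.assoc,
        comp_distTriang_mor_zero₃₁ _ hT]
      simp
    apply (shiftFunctor D (-1 : ℤ)).map_injective
    rw [Functor.map_zero, ← cancel_mono (ε.hom.app T.obj₁), hu, zero_comp]
  obtain ⟨g, rfl⟩ := Triangle.coyoneda_exact₃ _ hT f hf₃
  obtain ⟨u, rfl⟩ := (hbij e he).2 g
  simp [comp_distTriang_mor_zero₁₂ _ hT]

lemma hom_to_obj_eq_zero_of_lOrth {P : D → Prop}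
    (hP_shift : ∀ (X : D) (n : ℤ), P X → P (X⟦n⟧))
    {R : D ⥤ ObjectProperty.FullSubcategory P} (adjR : ObjectProperty.ι P ⊣ R)
    (Φ : D ⥤ D) [Φ.CommShift ℤ] [Φ.IsTriangulated] (hΦP : ∀ d : D, P d → P (Φ.obj d))
    (hΦ : ∀ d : D, rOrth P d → IsZero (Φ.obj d))
    {d : D} (hd : lOrth P d) (x : D) (g : d ⟶ Φ.obj x) : g = 0 := by
  obtain ⟨c, h, w, hT⟩ := distinguished_cocone_triangle (adjR.counit.app x)
  have hc : rOrth P c := rOrth_obj₃_of_bijective hP_shift hT fun e he =>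
    adjR.bijective_comp_counit (ObjectProperty.fullyFaithfulι P) ⟨e, he⟩ x
  obtain ⟨u, rfl⟩ := Triangle.coyoneda_exact₂ _ (Φ.map_distinguished _ hT) g
    ((hΦ c hc).eq_of_tgt _ _)
  rw [hd _ (hΦP _ (R.obj x).2) u]
  exact zero_comp

theorem left_adjoint_nilpotent_on_left_orthogonal_general
    (P : D → Prop)
    -- `E` is a thick subcategory:
    (hP_shift : ∀ (X : D) (n : ℤ), P X → P (X⟦n⟧))
    -- `E` is admissible:
    (_hadm_right : (ObjectProperty.ι P).IsLeftAdjoint)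
    -- `(G, F)` an adjoint pair of exact endofunctors:
    (F G : D ⥤ D) [F.CommShift ℤ] [F.IsTriangulated]
    (adj : G ⊣ F)
    -- `F` restricts to an autoequivalence of `E`:
    (hFP : ∀ d : D, P d → P (F.obj d))
    -- `F` acts nilpotently on `E^⊥`:
    (hnilp : ∃ b : ℕ, ∀ d : D, rOrth P d → IsZero ((iter F b).obj d)) :
    (∀ d : D, lOrth P d → lOrth P (G.obj d)) ∧
      ∃ b : ℕ, ∀ d : D, lOrth P d → IsZero ((iter G b).obj d) := by
  obtain ⟨b, hb⟩ := hnilp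
  have adjR := Adjunction.ofIsLeftAdjoint (ObjectProperty.ι P)
  refine ⟨fun d hd e he f => ?_, b, fun d hd => ?_⟩
  · exact adj.hom_eq_zero_of_forall_hom_eq_zero (hd _ (hFP e he)) f
  · rw [IsZero.iff_id_eq_zero]
    have hF : ∀ (x : D) (g : d ⟶ (iter F b).obj x), g = 0 :=
      hom_to_obj_eq_zero_of_lOrth hP_shift adjR (iter F b) (fun _ => prop_iter_obj hFP b) hb hd
    exact (iterAdjunction adj b).hom_eq_zero_of_forall_hom_eq_zero (hF _) _

theorem left_adjoint_nilpotent_on_left_orthogonal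
    (P : D → Prop)
    -- `E` is a thick subcategory:
    (hP_iso : ∀ {X Y : D}, (X ≅ Y) → P X → P Y)
    (hP_shift : ∀ (X : D) (n : ℤ), P X → P (X⟦n⟧))
    (hP_tri : ∀ T ∈ distTriang D, P T.obj₁ → P T.obj₂ → P T.obj₃)
    (hP_retract : ∀ (X Z : D), P Z → ∀ (i : X ⟶ Z) (r : Z ⟶ X), i ≫ r = 𝟙 X → P X)
    -- `E` is admissible:
    (_hadm_right : (ObjectProperty.ι P).IsLeftAdjoint)
    (_hadm_left : (ObjectProperty.ι P).IsRightAdjoint)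
    -- `(G, F)` an adjoint pair of exact endofunctors:
    (F G : D ⥤ D) [F.CommShift ℤ] [F.IsTriangulated] [G.CommShift ℤ] [G.IsTriangulated]
    (adj : G ⊣ F)
    -- `F` restricts to an autoequivalence of `E`:
    (hFP : ∀ d : D, P d → P (F.obj d))
    (hFE : (ObjectProperty.lift P (ObjectProperty.ι P ⋙ F)
      (fun X => hFP X.1 X.2)).IsEquivalence)
    -- `F` acts nilpotently on `E^⊥`:
    (hFperp : ∀ d : D, rOrth P d → rOrth P (F.obj d))
    (hnilp : ∃ b : ℕ, ∀ d : D, rOrth P d → IsZero ((iter F b).obj d)) :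
    (∀ d : D, lOrth P d → lOrth P (G.obj d)) ∧
      ∃ b : ℕ, ∀ d : D, lOrth P d → IsZero ((iter G b).obj d) :=
  left_adjoint_nilpotent_on_left_orthogonal_general P hP_shift _hadm_right F G adj hFP hnilp

end Stmt5
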